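/- Let S be an inverse semigroup, U and V left inverse S-sets, and σ : U → V a map preserving left pairings (⟨σ(u), σ(u')⟩_V = ⟨u, u'⟩_U for all u, u'). Then σ is automatically a left S-map, i.e., σ(su) = s σ(u) for all s ∈ S and u ∈ U, and σ is injective. -/
import Mathlib


/-- An inverse semigroup: a semigroup in which every element has a unique
generalized inverse `star s`. -/
class InverseSemigroup (S : Type*) extends Semigroup S where
  star : S → S
  mul_star_mul : ∀ s : S, s * star s * s = s
  star_mul_star : ∀ s : S, star s * s * star s = star s
  star_unique : ∀ s t : S, s * t * s = s → t * s * t = t → t = star s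

postfix:max "⋆" => InverseSemigroup.star

/-- A left regular `S`-set over an inverse semigroup `S`. -/
structure LeftRegularSet (S : Type*) [InverseSemigroup S] (U : Type*) where
  smul : S → U → U
  pair : U → U → S
  smul_smul : ∀ (s s' : S) (u : U), smul s (smul s' u) = smul (s * s') u
  pair_smul_left : ∀ (s : S) (u u' : U), pair (smul s u) u' = s * pair u u'
  pair_star : ∀ u u' : U, (pair u u')⋆ = pair u' u
  pair_self_smul : ∀ u : U, smul (pair u u) u = u

/-- Condition (L-iv): the left regular `S`-set is a left inverse `S`-set. -/
def LeftRegularSet.IsInverse {S : Type*} [InverseSemigroup S] {U : Type*}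
    (M : LeftRegularSet S U) : Prop :=
  ∀ u u' : U, M.smul (M.pair u u') u = u → M.smul (M.pair u' u) u' = u' → u = u'

namespace InverseSemigroup
variable {S : Type*} [InverseSemigroup S]


variable {S : Type*} [InverseSemigroup S]

lemma star_of_idem {e : S} (he : e * e = e) : e⋆ = e :=
  (star_unique e e (by rw [he, he]) (by rw [he, he])).symm

lemma idem_mul_idem {e f : S} (he : e * e = e) (hf : f * f = f) :
    (e * f) * (e * f) = e * f := by
  set a := (e * f)⋆ with ha
  have h1 : (e * f) * a * (e * f) = e * f := mul_star_mul _
  have h2 : a * (e * f) * a = a := star_mul_star _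
  have he' : ∀ x : S, e * (e * x) = e * x := fun x => by rw [← mul_assoc, he]
  have hf' : ∀ x : S, f * (f * x) = f * x := fun x => by rw [← mul_assoc, hf]
  have h2' : ∀ x : S, a * (e * (f * (a * x))) = a * x := fun x => by
    have := congrArg (· * x) h2; simpa only [mul_assoc] using this
  have h1' : ∀ x : S, e * (f * (a * (e * (f * x)))) = e * (f * x) := fun x => by
    have := congrArg (· * x) h1; simpa only [mul_assoc] using this
  have hfae : f * a * e = a := by
    refine star_unique (e * f) (f * a * e) ?_ ?_
    · show (e * f) * (f * a * e) * (e * f) = e * f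
      simp only [mul_assoc, hf', he', h1']
      simpa only [mul_assoc] using h1
    · show (f * a * e) * (e * f) * (f * a * e) = f * a * e
      simp only [mul_assoc, he', hf', h2']
  have haidem : a * a = a := by
    conv_lhs => rw [← hfae]
    show (f * a * e) * (f * a * e) = a
    simp only [mul_assoc, h2']
    rw [← mul_assoc, hfae]
  have h3 : e * f = a⋆ := star_unique a (e * f) h2 h1
  rw [h3, star_of_idem haidem]
  exact haidem

lemma idem_comm {e f : S} (he : e * e = e) (hf : f * f = f) :
    e * f = f * e := by
  have hef := idem_mul_idem he hf
  have hfe := idem_mul_idem hf he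
  have he' : ∀ x : S, e * (e * x) = e * x := fun x => by rw [← mul_assoc, he]
  have hf' : ∀ x : S, f * (f * x) = f * x := fun x => by rw [← mul_assoc, hf]
  have hef' : ∀ x : S, e * (f * (e * (f * x))) = e * (f * x) := fun x => by
    have := congrArg (· * x) hef; simpa only [mul_assoc] using this
  have hfe' : ∀ x : S, f * (e * (f * (e * x))) = f * (e * x) := fun x => by
    have := congrArg (· * x) hfe; simpa only [mul_assoc] using this
  have h1 : (e * f) * (f * e) * (e * f) = e * f := by
    simp only [mul_assoc, hf', he']
    simpa only [mul_assoc] using hef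
  have h2 : (f * e) * (e * f) * (f * e) = f * e := by
    simp only [mul_assoc, he', hf']
    simpa only [mul_assoc] using hfe
  have h3 := star_unique (e * f) (f * e) h1 h2
  rw [h3, star_of_idem hef]

lemma star_mul_self_idem (s : S) : (s⋆ * s) * (s⋆ * s) = s⋆ * s := by
  have := congrArg (s⋆ * ·) (mul_star_mul s)
  simpa only [mul_assoc] using this

lemma mul_star_self_idem (s : S) : (s * s⋆) * (s * s⋆) = s * s⋆ := by
  have := congrArg (· * s⋆) (mul_star_mul s)
  simpa only [mul_assoc] using this

lemma star_mul (s t : S) : (s * t)⋆ = t⋆ * s⋆ := by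
  have hc : (t * t⋆) * (s⋆ * s) = (s⋆ * s) * (t * t⋆) :=
    idem_comm (mul_star_self_idem t) (star_mul_self_idem s)
  refine (star_unique (s * t) (t⋆ * s⋆) ?_ ?_).symm
  · have : s * ((t * t⋆) * (s⋆ * s)) * t = s * ((s⋆ * s) * (t * t⋆)) * t := by
      rw [hc]
    calc (s * t) * (t⋆ * s⋆) * (s * t)
        = s * ((t * t⋆) * (s⋆ * s)) * t := by simp only [mul_assoc]
      _ = s * ((s⋆ * s) * (t * t⋆)) * t := this
      _ = (s * s⋆ * s) * (t * t⋆ * t) := by simp only [mul_assoc]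
      _ = s * t := by rw [mul_star_mul, mul_star_mul]
  · have : t⋆ * ((s⋆ * s) * (t * t⋆)) * s⋆ = t⋆ * ((t * t⋆) * (s⋆ * s)) * s⋆ := by
      rw [hc]
    calc (t⋆ * s⋆) * (s * t) * (t⋆ * s⋆)
        = t⋆ * ((s⋆ * s) * (t * t⋆)) * s⋆ := by simp only [mul_assoc]
      _ = t⋆ * ((t * t⋆) * (s⋆ * s)) * s⋆ := this
      _ = (t⋆ * t * t⋆) * (s⋆ * s * s⋆) := by simp only [mul_assoc]
      _ = t⋆ * s⋆ := by rw [star_mul_star, star_mul_star]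


end InverseSemigroup

open InverseSemigroup

theorem stmt7 {S : Type*} [InverseSemigroup S] {U V : Type*}
    (M : LeftRegularSet S U) (N : LeftRegularSet S V)
    (hM : M.IsInverse) (hN : N.IsInverse) (σ : U → V)
    (hσ : ∀ u u' : U, N.pair (σ u) (σ u') = M.pair u u') :
    (∀ (s : S) (u : U), σ (M.smul s u) = N.smul s (σ u)) ∧
      Function.Injective σ := by
  classical
  have star_star : ∀ s : S, (s⋆)⋆ = s := fun s =>
    (star_unique s⋆ s (star_mul_star s) (mul_star_mul s)).symm
  have key : ∀ (s : S) (u : U), σ (M.smul s u) = N.smul s (σ u) := by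
    intro s u
    set p := M.pair u u with hp
    have hpidem : p * p = p := by
      have h := M.pair_smul_left p u u
      rw [M.pair_self_smul] at h
      exact h.symm
    have hps : M.pair (M.smul s u) u = s * p := M.pair_smul_left s u u
    have hsp_star : (s * p)⋆ = p * s⋆ := by
      rw [InverseSemigroup.star_mul, star_of_idem hpidem]
    have hpair_u_su : M.pair u (M.smul s u) = p * s⋆ := by
      rw [← M.pair_star (M.smul s u) u, hps, hsp_star]
    set v := σ (M.smul s u) with hv
    set w := N.smul s (σ u) with hw
    have hA : N.pair v v = s * (p * s⋆) := by
      rw [hv, hσ, M.pair_smul_left, hpair_u_su]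
    have hB : N.pair w v = s * (p * s⋆) := by
      rw [hw, hv, N.pair_smul_left, hσ, hpair_u_su]
    have hp' : ∀ x : S, p * (p * x) = p * x := fun x => by
      rw [← mul_assoc, hpidem]
    have hc : p * (s⋆ * s) = (s⋆ * s) * p := idem_comm hpidem (star_mul_self_idem s)
    have hc' : ∀ x : S, p * (s⋆ * (s * x)) = s⋆ * (s * (p * x)) := fun x => by
      have := congrArg (· * x) hc
      simpa only [mul_assoc] using this
    have hs' : ∀ x : S, s * (s⋆ * (s * x)) = s * x := fun x => by
      have := congrArg (· * x) (mul_star_mul s)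
      simpa only [mul_assoc] using this
    have hE : (s * (p * s⋆)) * (s * (p * s⋆)) = s * (p * s⋆) := by
      simp only [mul_assoc, hc', hp', hs']
    have hC : N.pair v w = s * (p * s⋆) := by
      rw [← N.pair_star w v, hB, star_of_idem hE]
    have cond1 : N.smul (N.pair v w) v = v := by
      rw [hC, ← hA]
      exact N.pair_self_smul v
    have cond2 : N.smul (N.pair w v) w = w := by
      have hstep : (s * (p * s⋆)) * s = s * p := by
        calc (s * (p * s⋆)) * s = s * (p * (s⋆ * s)) := by simp only [mul_assoc]
          _ = s * ((s⋆ * s) * p) := by rw [hc]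
          _ = (s * s⋆ * s) * p := by simp only [mul_assoc]
          _ = s * p := by rw [mul_star_mul]
      have hfix : N.smul p (σ u) = σ u := by
        have := N.pair_self_smul (σ u)
        rwa [hσ u u] at this
      rw [hB, hw, N.smul_smul, hstep, ← N.smul_smul, hfix]
    exact hN v w cond1 cond2
  refine ⟨key, ?_⟩
  intro u u' h
  apply hM u u'
  · have h1 : M.pair u u' = M.pair u u := by
      rw [← hσ u u', ← h, hσ]
    rw [h1]
    exact M.pair_self_smul u
  · have h2 : M.pair u' u = M.pair u' u' := by
      rw [← hσ u' u, h, hσ]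
    rw [h2]
    exact M.pair_self_smul u'
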